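/- Let $n \ge 1$, $p \ge 1$, and $\lambda \in (\frac{n}{n+p}, 1)$. For every nonnegative compactly supported measurable function $g$ on $\mathbb{R}^n$ with $\|g\|_1, \|g\|_\lambda \in (0,\infty)$, writing $l(t) = \mathrm{vol}(\{g \ge t\})$, there exists a constant $B_{n,p,\lambda} > 0$ depending only on $n,p,\lambda$ such that $\|g\|_\lambda^\lambda \le B_{n,p,\lambda}\, \|g\|_1^{\frac{(n+p)(\lambda-1)+p}{p}} \left(\int_0^\infty l(t)^{\frac{n+p}{n}} dt\right)^{\frac{(1-\lambda)n}{p}}$. -/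

import Mathlib

open MeasureTheory Real
open scoped ENNReal

/-!
Write `l t = vol {g ≥ t}`, `q = (n + p) / n`, `q' = (n + p) / p` (conjugate exponents) and
`J = ∫ l ^ q`. By the layer cake formula `∫ g ^ λ = λ ∫₀^∞ l(t) t ^ (λ - 1) dt`. For every scale
`s > 0`, `t ^ (λ - 1) ≤ s ^ (λ - 1) ((t / s) ^ (λ - 1) - 1)₊ + s ^ (λ - 1)`; Hölder on the first
term and `∫₀^s (t / s) ^ ((λ - 1) q') dt = s / A`, where `A = (λ - 1) q' + 1 > 0` exactly when
`λ > 1 / q = n / (n + p)`, give `∫ g ^ λ ≤ λ s ^ (λ - 1) (J ^ (1 / q) (s / A) ^ (1 / q') + ‖g‖₁)`.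
The scale `s = ‖g‖₁ ^ q' J ^ (-q' / q)` makes both terms proportional to `‖g‖₁`.
-/

lemma lintegral_Ioc_zero_rpow {s β : ℝ} (hs : 0 < s) (hβ : -1 < β) :
    ∫⁻ t in Set.Ioc 0 s, ENNReal.ofReal (t ^ β) = ENNReal.ofReal (s ^ (β + 1) / (β + 1)) := by
  have hint : IntegrableOn (fun t : ℝ => t ^ β) (Set.Ioc 0 s) := by
    have := intervalIntegral.intervalIntegrable_rpow' (a := 0) (b := s) hβ
    rwa [intervalIntegrable_iff, Set.uIoc_of_le hs.le] at this
  rw [← ofReal_integral_eq_lintegral_ofReal hint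
    ((ae_restrict_mem measurableSet_Ioc).mono fun t ht => rpow_nonneg ht.1.le β),
    ← intervalIntegral.integral_of_le hs.le, integral_rpow (Or.inl hβ),
    zero_rpow (by linarith), sub_zero]

/-- The paper's `q_λ(t) ^ (p / n)`. -/
noncomputable def powExcess (lam t : ℝ) : ℝ := max (t ^ (lam - 1) - 1) 0

lemma powExcess_nonneg (lam t : ℝ) : 0 ≤ powExcess lam t := le_max_right _ _

lemma measurable_powExcess (lam : ℝ) : Measurable (powExcess lam) :=
  ((measurable_id.pow_const _).sub_const _).max measurable_const

lemma rpow_sub_one_le_powExcess_add_one (lam t : ℝ) : t ^ (lam - 1) ≤ powExcess lam t + 1 := by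
  have := le_max_left (t ^ (lam - 1) - 1) 0
  unfold powExcess
  linarith

lemma powExcess_le_rpow {lam t : ℝ} (ht : 0 ≤ t) : powExcess lam t ≤ t ^ (lam - 1) :=
  max_le (by linarith) (rpow_nonneg ht _)

lemma powExcess_eq_zero {lam t : ℝ} (hlam : lam < 1) (ht : 1 ≤ t) : powExcess lam t = 0 :=
  max_eq_right (by linarith [rpow_le_one_of_one_le_of_nonpos ht (by linarith : lam - 1 ≤ 0)])

lemma lintegral_powExcess_rpow_le {lam r s : ℝ} (hlam : lam < 1) (hr : 0 < r) (hs : 0 < s)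
    (hA : 0 < (lam - 1) * r + 1) :
    ∫⁻ t in Set.Ioi 0, ENNReal.ofReal (powExcess lam (t / s)) ^ r ≤
      ENNReal.ofReal (s / ((lam - 1) * r + 1)) := by
  set β := (lam - 1) * r
  have hpt : ∀ t ∈ Set.Ioi (0 : ℝ), ENNReal.ofReal (powExcess lam (t / s)) ^ r ≤
      (Set.Ioc 0 s).indicator (fun t => ENNReal.ofReal (s ^ (-β) * t ^ β)) t := by
    intro t (ht : 0 < t)
    rw [ENNReal.ofReal_rpow_of_nonneg (powExcess_nonneg _ _) hr.le]
    rcases le_or_gt t s with hts | hts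
    · rw [Set.indicator_of_mem (Set.mem_Ioc.2 ⟨ht, hts⟩)]
      refine ENNReal.ofReal_le_ofReal ((rpow_le_rpow (powExcess_nonneg _ _)
        (powExcess_le_rpow (by positivity)) hr.le).trans_eq ?_)
      rw [← rpow_mul (by positivity), div_rpow ht.le hs.le, rpow_neg hs.le, div_eq_inv_mul]
    · rw [powExcess_eq_zero hlam ((one_le_div hs).2 hts.le), zero_rpow hr.ne',
        ENNReal.ofReal_zero]
      exact zero_le
  calc ∫⁻ t in Set.Ioi 0, ENNReal.ofReal (powExcess lam (t / s)) ^ r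
      ≤ ∫⁻ t in Set.Ioi 0, (Set.Ioc 0 s).indicator
          (fun t => ENNReal.ofReal (s ^ (-β) * t ^ β)) t :=
        setLIntegral_mono' measurableSet_Ioi hpt
    _ = ENNReal.ofReal (s ^ (-β)) * ∫⁻ t in Set.Ioc 0 s, ENNReal.ofReal (t ^ β) := by
        rw [lintegral_indicator measurableSet_Ioc, Measure.restrict_restrict measurableSet_Ioc,
          Set.inter_eq_left.2 Set.Ioc_subset_Ioi_self,
          ← lintegral_const_mul' _ _ ENNReal.ofReal_ne_top]
        simp_rw [ENNReal.ofReal_mul (rpow_nonneg hs.le _)]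
    _ = ENNReal.ofReal (s / (β + 1)) := by
        rw [lintegral_Ioc_zero_rpow hs (by linarith), ← ENNReal.ofReal_mul (by positivity),
          ← mul_div_assoc, ← rpow_add hs, neg_add_cancel_left, rpow_one]

lemma exists_pos_rpow_mul_add_eq {q q' lam A γ j : ℝ} (hq' : q' ≠ 0) (hA : 0 < A)
    (hγ : 0 < γ) (hj : 0 < j) :
    ∃ s > 0, s ^ (lam - 1) * (j ^ (1 / q) * (s / A) ^ (1 / q') + γ) =
      (A ^ (-(1 / q')) + 1) * γ ^ ((lam - 1) * q' + 1) * j ^ ((1 - lam) * q' / q) := by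
  refine ⟨γ ^ q' * j ^ (-(q' / q)), by positivity, ?_⟩
  have hroot : (γ ^ q' * j ^ (-(q' / q))) ^ (1 / q') = γ * j ^ (-(1 / q)) := by
    rw [mul_rpow (by positivity) (by positivity), ← rpow_mul hγ.le, ← rpow_mul hj.le,
      mul_one_div_cancel hq', rpow_one]
    congr 2
    field_simp
  have hpow : (γ ^ q' * j ^ (-(q' / q))) ^ (lam - 1) * γ =
      γ ^ ((lam - 1) * q' + 1) * j ^ ((1 - lam) * q' / q) := by
    rw [mul_rpow (by positivity) (by positivity), ← rpow_mul hγ.le, ← rpow_mul hj.le,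
      rpow_add hγ, rpow_one]
    ring_nf
  have hcancel : j ^ (1 / q) * j ^ (-(1 / q)) = 1 := by
    rw [← rpow_add hj, add_neg_cancel, rpow_zero]
  rw [div_rpow (by positivity) hA.le, hroot, rpow_neg hA.le]
  linear_combination (γ ^ q' * j ^ (-(q' / q))) ^ (lam - 1) * γ * (A ^ (1 / q'))⁻¹ * hcancel +
    ((A ^ (1 / q'))⁻¹ + 1) * hpow

lemma Real.HolderConjugate.sub_one_mul_add_one_pos {q q' lam : ℝ} (hq : q.HolderConjugate q')
    (hlam : q⁻¹ < lam) : 0 < (lam - 1) * q' + 1 := by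
  have := hq.inv_add_inv_eq_one
  nlinarith [hq.symm.pos, mul_inv_cancel₀ hq.symm.ne_zero]

section LayerCake

variable {α : Type*} [MeasurableSpace α] {μ : Measure α} {g : α → ℝ}

lemma antitone_measure_setOf_le (μ : Measure α) (g : α → ℝ) :
    Antitone fun t => μ {x | t ≤ g x} :=
  fun _ _ h => measure_mono fun _ hx => h.trans hx

lemma lintegral_rpow_le_lintegral_meas_le_mul_powExcess (hg0 : 0 ≤ᵐ[μ] g)
    (hg : AEMeasurable g μ) {lam s : ℝ} (hlam : 0 < lam) (hs : 0 < s) :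
    ∫⁻ x, ENNReal.ofReal (g x ^ lam) ∂μ ≤ ENNReal.ofReal lam * ENNReal.ofReal (s ^ (lam - 1)) *
      ((∫⁻ t in Set.Ioi 0, μ {x | t ≤ g x} * ENNReal.ofReal (powExcess lam (t / s))) +
        ∫⁻ x, ENNReal.ofReal (g x) ∂μ) := by
  have hmeas : Measurable fun t => μ {x | t ≤ g x} * ENNReal.ofReal (powExcess lam (t / s)) :=
    (antitone_measure_setOf_le μ g).measurable.mul
      ((measurable_powExcess lam).comp (measurable_id.div_const s)).ennreal_ofReal
  have hpt : ∀ t ∈ Set.Ioi (0 : ℝ), μ {x | t ≤ g x} * ENNReal.ofReal (t ^ (lam - 1)) ≤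
      ENNReal.ofReal (s ^ (lam - 1)) *
        (μ {x | t ≤ g x} * ENNReal.ofReal (powExcess lam (t / s)) + μ {x | t ≤ g x}) := by
    intro t (ht : 0 < t)
    have hsplit : t ^ (lam - 1) = s ^ (lam - 1) * (t / s) ^ (lam - 1) := by
      rw [div_rpow ht.le hs.le]
      field_simp
    calc μ {x | t ≤ g x} * ENNReal.ofReal (t ^ (lam - 1))
        ≤ μ {x | t ≤ g x} * (ENNReal.ofReal (s ^ (lam - 1)) *
            (ENNReal.ofReal (powExcess lam (t / s)) + 1)) := by
          rw [hsplit, ENNReal.ofReal_mul (by positivity), ← ENNReal.ofReal_one,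
            ← ENNReal.ofReal_add (powExcess_nonneg _ _) zero_le_one]
          gcongr
          exact rpow_sub_one_le_powExcess_add_one _ _
      _ = _ := by ring
  rw [lintegral_rpow_eq_lintegral_meas_le_mul μ hg0 hg hlam,
    lintegral_eq_lintegral_meas_le μ hg0 hg, mul_assoc]
  gcongr ENNReal.ofReal lam * ?_
  rw [← lintegral_add_left hmeas, ← lintegral_const_mul' _ _ ENNReal.ofReal_ne_top]
  exact setLIntegral_mono' measurableSet_Ioi hpt

lemma lintegral_rpow_le_of_scale {q q' lam s : ℝ} (hq : q.HolderConjugate q') (hlam : q⁻¹ < lam)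
    (hlam1 : lam < 1) (hs : 0 < s) (hg0 : 0 ≤ᵐ[μ] g) (hg : AEMeasurable g μ) :
    ∫⁻ x, ENNReal.ofReal (g x ^ lam) ∂μ ≤ ENNReal.ofReal lam * ENNReal.ofReal (s ^ (lam - 1)) *
      ((∫⁻ t in Set.Ioi 0, μ {x | t ≤ g x} ^ q) ^ (1 / q) *
        ENNReal.ofReal (s / ((lam - 1) * q' + 1)) ^ (1 / q') + ∫⁻ x, ENNReal.ofReal (g x) ∂μ) := by
  refine (lintegral_rpow_le_lintegral_meas_le_mul_powExcess hg0 hg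
    ((inv_pos.2 hq.pos).trans hlam) hs).trans ?_
  gcongr
  calc ∫⁻ t in Set.Ioi 0, μ {x | t ≤ g x} * ENNReal.ofReal (powExcess lam (t / s))
      ≤ (∫⁻ t in Set.Ioi 0, μ {x | t ≤ g x} ^ q) ^ (1 / q) *
          (∫⁻ t in Set.Ioi 0, ENNReal.ofReal (powExcess lam (t / s)) ^ q') ^ (1 / q') :=
        ENNReal.lintegral_mul_le_Lp_mul_Lq _ hq
          (antitone_measure_setOf_le μ g).measurable.aemeasurable
          ((measurable_powExcess lam).comp (measurable_id.div_const s)).ennreal_ofReal.aemeasurable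
    _ ≤ _ := by
        gcongr
        · exact one_div_nonneg.2 hq.symm.nonneg
        · exact lintegral_powExcess_rpow_le hlam1 hq.symm.pos hs (hq.sub_one_mul_add_one_pos hlam)

theorem lintegral_rpow_le_mul_lintegral_rpow_mul_lintegral_meas_le_rpow {q q' lam : ℝ}
    (hq : q.HolderConjugate q') (hlam : q⁻¹ < lam) (hlam1 : lam < 1) (hg0 : 0 ≤ᵐ[μ] g)
    (hg : AEMeasurable g μ) (hG0 : ∫⁻ x, ENNReal.ofReal (g x) ∂μ ≠ 0)
    (hG : ∫⁻ x, ENNReal.ofReal (g x) ∂μ ≠ ∞) :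
    ∫⁻ x, ENNReal.ofReal (g x ^ lam) ∂μ ≤
      ENNReal.ofReal (lam * (((lam - 1) * q' + 1) ^ (-(1 / q')) + 1)) *
        (∫⁻ x, ENNReal.ofReal (g x) ∂μ) ^ ((lam - 1) * q' + 1) *
        (∫⁻ t in Set.Ioi 0, μ {x | t ≤ g x} ^ q) ^ ((1 - lam) * q' / q) := by
  have hA := hq.sub_one_mul_add_one_pos hlam
  have hlam0 : 0 < lam := (inv_pos.2 hq.pos).trans hlam
  have hexp : 0 < (1 - lam) * q' / q := div_pos (mul_pos (sub_pos.2 hlam1) hq.symm.pos) hq.pos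
  by_cases hJ : ∫⁻ t in Set.Ioi 0, μ {x | t ≤ g x} ^ q = ∞
  · rw [hJ, ENNReal.top_rpow_of_pos hexp, ENNReal.mul_top]
    · exact le_top
    · exact mul_ne_zero (ENNReal.ofReal_pos.2 (by positivity)).ne'
        (ENNReal.rpow_pos (pos_iff_ne_zero.2 hG0) hG).ne'
  have hJ0 : ∫⁻ t in Set.Ioi 0, μ {x | t ≤ g x} ^ q ≠ 0 := by
    intro h0
    rw [lintegral_eq_zero_iff ((antitone_measure_setOf_le μ g).measurable.pow_const q)] at h0
    refine hG0 ((lintegral_eq_lintegral_meas_le μ hg0 hg).trans ?_)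
    rw [lintegral_eq_zero_iff (antitone_measure_setOf_le μ g).measurable]
    filter_upwards [h0] with t ht
    exact (ENNReal.rpow_eq_zero_iff_of_pos hq.pos).1 ht
  obtain ⟨s, hs, hscale⟩ := exists_pos_rpow_mul_add_eq (lam := lam) hq.symm.ne_zero hA
    (ENNReal.toReal_pos hG0 hG) (ENNReal.toReal_pos hJ0 hJ)
  refine (lintegral_rpow_le_of_scale hq hlam hlam1 hs hg0 hg).trans_eq ?_
  rw [← ENNReal.ofReal_toReal hG, ← ENNReal.ofReal_toReal hJ]
  set γ := (∫⁻ x, ENNReal.ofReal (g x) ∂μ).toReal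
  set j := (∫⁻ t in Set.Ioi 0, μ {x | t ≤ g x} ^ q).toReal
  have hγ : 0 < γ := ENNReal.toReal_pos hG0 hG
  have hj : 0 < j := ENNReal.toReal_pos hJ0 hJ
  calc _ = ENNReal.ofReal (lam * s ^ (lam - 1) *
          (j ^ (1 / q) * (s / ((lam - 1) * q' + 1)) ^ (1 / q') + γ)) := by
        rw [ENNReal.ofReal_mul (by positivity), ENNReal.ofReal_mul hlam0.le,
          ENNReal.ofReal_add (by positivity) hγ.le, ENNReal.ofReal_mul (by positivity),
          ← ENNReal.ofReal_rpow_of_pos hj, ← ENNReal.ofReal_rpow_of_pos (div_pos hs hA)]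
    _ = ENNReal.ofReal (lam * (((lam - 1) * q' + 1) ^ (-(1 / q')) + 1) *
          γ ^ ((lam - 1) * q' + 1) * j ^ ((1 - lam) * q' / q)) := by
        rw [mul_assoc lam, hscale, mul_assoc, mul_assoc, mul_assoc]
    _ = _ := by
        rw [ENNReal.ofReal_mul (by positivity), ENNReal.ofReal_mul (by positivity),
          ENNReal.ofReal_rpow_of_pos hγ, ENNReal.ofReal_rpow_of_pos hj]

end LayerCake

theorem stmt4 (n : ℕ) (hn : 1 ≤ n) (p lam : ℝ) (hp : 1 ≤ p)
    (hlam1 : (n : ℝ) / ((n : ℝ) + p) < lam) (hlam2 : lam < 1) :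
    ∃ B : ℝ, 0 < B ∧
      ∀ g : EuclideanSpace ℝ (Fin n) → ℝ, Measurable g → (∀ x, 0 ≤ g x) →
        HasCompactSupport g →
        0 < (∫⁻ x, ENNReal.ofReal (g x)) → (∫⁻ x, ENNReal.ofReal (g x)) < ∞ →
        0 < (∫⁻ x, ENNReal.ofReal (g x ^ lam)) →
        (∫⁻ x, ENNReal.ofReal (g x ^ lam)) < ∞ →
        (∫⁻ x, ENNReal.ofReal (g x ^ lam)) ≤
          ENNReal.ofReal B *
            (∫⁻ x, ENNReal.ofReal (g x)) ^ ((((n : ℝ) + p) * (lam - 1) + p) / p) *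
            (∫⁻ t in Set.Ioi (0 : ℝ), volume {x | t ≤ g x} ^ (((n : ℝ) + p) / n)) ^
              ((1 - lam) * n / p) := by
  have hn' : (0 : ℝ) < n := by exact_mod_cast hn
  have hp' : (0 : ℝ) < p := by linarith
  have hq : (((n : ℝ) + p) / n).HolderConjugate (((n : ℝ) + p) / p) := by
    refine ⟨?_, by positivity, by positivity⟩
    rw [inv_div, inv_div, ← add_div, div_self (by positivity), inv_one]
  have hlam : (((n : ℝ) + p) / n)⁻¹ < lam := by rwa [inv_div]
  have hlam0 : 0 < lam := (inv_pos.2 hq.pos).trans hlam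
  have hA := hq.sub_one_mul_add_one_pos hlam
  refine ⟨lam * (((lam - 1) * (((n : ℝ) + p) / p) + 1) ^ (-(1 / (((n : ℝ) + p) / p))) + 1),
    by positivity, fun g hg hg0 _ hG0 hG _ _ => ?_⟩
  convert lintegral_rpow_le_mul_lintegral_rpow_mul_lintegral_meas_le_rpow hq hlam hlam2
    (ae_of_all _ hg0) hg.aemeasurable hG0.ne' hG.ne using 3
  · field_simp
  · field_simp
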